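/- arXiv:cs/0502078 — 3 statements merged into one kernel-verified Lean document; each statement's English description precedes it below -/
import Mathlib

section
/- For finite disjunctive logic programs P and Q, P and Q are uniformly equivalent if and only if UE(P) = UE(Q), where UE(P) is the set of UE-models of P. -/
structure Rule where
  head : Finset ℕ
  pos : Finset ℕ
  neg : Finset ℕ

abbrev Interp := Set ℕ
abbrev Program := Set Rule

/-- Classical satisfaction of a rule by an interpretation. -/
def Rule.satisfied (I : Interp) (r : Rule) : Prop :=
  ((↑r.pos ⊆ I) ∧ ∀ a ∈ r.neg, a ∉ I) → ∃ a ∈ r.head, a ∈ I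

/-- `I` is a classical model of the program `P`. -/
def Models (I : Interp) (P : Program) : Prop := ∀ r ∈ P, Rule.satisfied I r

/-- `X` models the Gelfond-Lifschitz reduct `P^Y`. -/
def ModelsReduct (X : Interp) (P : Program) (Y : Interp) : Prop :=
  ∀ r ∈ P, (∀ a ∈ r.neg, a ∉ Y) → (↑r.pos ⊆ X) → ∃ a ∈ r.head, a ∈ X

/-- `Y` is an answer set of `P`: a minimal model of the reduct `P^Y`. -/
def AnswerSet (P : Program) (Y : Interp) : Prop :=
  ModelsReduct Y P Y ∧ ∀ Z : Interp, Z ⊂ Y → ¬ ModelsReduct Z P Y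

/-- `(X,Y)` is an SE-model of `P`. -/
def SEModel (P : Program) (X Y : Interp) : Prop :=
  X ⊆ Y ∧ Models Y P ∧ ModelsReduct X P Y

/-- `(X,Y)` is a UE-model of `P`. -/
def UEModel (P : Program) (X Y : Interp) : Prop :=
  SEModel P X Y ∧ ∀ X', SEModel P X' Y → X ⊂ X' → X' = Y

/-- The program consisting of the atoms in `F` as facts. -/
def Facts (F : Set ℕ) : Program := { r | ∃ a ∈ F, r = ⟨{a}, ∅, ∅⟩ }

/-- Uniform equivalence of programs. -/
def UnifEquiv (P Q : Program) : Prop :=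
  ∀ F : Set ℕ, ∀ Y : Interp, AnswerSet (P ∪ Facts F) Y ↔ AnswerSet (Q ∪ Facts F) Y

/-- Strong equivalence of programs. -/
def StrongEquiv (P Q : Program) : Prop :=
  ∀ R : Program, ∀ Y : Interp, AnswerSet (P ∪ R) Y ↔ AnswerSet (Q ∪ R) Y

def Rule.atoms (r : Rule) : Finset ℕ := r.head ∪ r.pos ∪ r.neg

/-- All atoms occurring in `R` belong to `A`. -/
def ProgramOver (A : Set ℕ) (R : Program) : Prop := ∀ r ∈ R, ↑r.atoms ⊆ A

/-- Strong equivalence relative to a set of atoms `A`. -/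
def RelStrongEquiv (A : Set ℕ) (P Q : Program) : Prop :=
  ∀ R : Program, ProgramOver A R →
    ∀ Y : Interp, AnswerSet (P ∪ R) Y ↔ AnswerSet (Q ∪ R) Y

/-- Uniform equivalence relative to a set of atoms `A`. -/
def RelUnifEquiv (A : Set ℕ) (P Q : Program) : Prop :=
  ∀ F : Set ℕ, F ⊆ A →
    ∀ Y : Interp, AnswerSet (P ∪ Facts F) Y ↔ AnswerSet (Q ∪ Facts F) Y

/-- A unary rule: one head atom, no negation, at most one positive body atom. -/
def Unary (r : Rule) : Prop := r.head.card = 1 ∧ r.neg = ∅ ∧ r.pos.card ≤ 1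

/-- `(X,Y)` is a (relativized) `A`-SE-model of `P`. -/
def ASEModel (A : Set ℕ) (P : Program) (X Y : Interp) : Prop :=
  (X = Y ∨ X ⊂ Y ∩ A) ∧ Models Y P ∧
  (∀ Y' : Interp, Y' ⊂ Y → Y' ∩ A = Y ∩ A → ¬ ModelsReduct Y' P Y) ∧
  (X ⊂ Y → ∃ X' : Interp, X' ⊆ Y ∧ X' ∩ A = X ∧ ModelsReduct X' P Y)

/-- `(X,Y)` is a (relativized) `A`-UE-model of `P`. -/
def AUEModel (A : Set ℕ) (P : Program) (X Y : Interp) : Prop :=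
  ASEModel A P X Y ∧ ∀ X', ASEModel A P X' Y → X ⊂ X' → X' = Y

/-- A positive program: all rules have empty negative body. -/
def Positive (P : Program) : Prop := ∀ r ∈ P, r.neg = ∅

/-- Positive dependency: edge from a positive body atom to a head atom. -/
def Dep (P : Program) (a b : ℕ) : Prop := ∃ r ∈ P, a ∈ r.pos ∧ b ∈ r.head

/-- Head-cycle freeness: no directed cycle of the positive dependency graph
through two distinct head atoms of one rule. -/
def HCF (P : Program) : Prop :=
  ∀ r ∈ P, ∀ a ∈ r.head, ∀ b ∈ r.head, a ≠ b →
    ¬ (Relation.ReflTransGen (Dep P) a b ∧ Relation.ReflTransGen (Dep P) b a)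

/-- The shift of a single rule. -/
def Rule.shift (r : Rule) : Program :=
  if r.head = ∅ then {r}
  else { r' | ∃ a ∈ r.head, r' = ⟨{a}, r.pos, r.neg ∪ (r.head.erase a)⟩ }

/-- The shift of a program. -/
def shiftProg (P : Program) : Program := ⋃ r ∈ P, r.shift

/-- The set of SE-models of `P` as a set of pairs. -/
def SEset (P : Program) : Set (Interp × Interp) := { p | SEModel P p.1 p.2 }

/-!
Y is an answer set of P ∪ F exactly when Y ⊨ P, F ⊆ Y, and no SE-model (X,Y) of P with
F ⊆ X ⊂ Y exists. For a finite program every such SE-model extends to a UE-model (M,Y) with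
M ⊂ Y, since the reduct only sees the finitely many atoms of P; so answer sets of P ∪ F are
determined by the UE-models of P, which gives one direction. Conversely, if (X,Y) is a UE-model
of P with X ⊂ Y, then Y is not an answer set of P ∪ X, hence not of Q ∪ X, so Q has a UE-model
(M,Y) with X ⊆ M ⊂ Y; if X ⊂ M, running the argument back from M yields an SE-model of P
strictly between X and Y, against the maximality of X.
-/

lemma Set.finite_Icc_of_finite_sdiff {α : Type*} {B Y : Set α} (h : (Y \ B).Finite) :
    (Set.Icc B Y).Finite :=
  (h.finite_subsets.image (B ∪ ·)).subset fun Z hZ =>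
    ⟨Z \ B, Set.sdiff_subset_sdiff_left hZ.2, Set.union_sdiff_cancel hZ.1⟩

lemma exists_finite_programOver {P : Program} (hP : P.Finite) :
    ∃ A : Set ℕ, A.Finite ∧ ProgramOver A P :=
  ⟨⋃ r ∈ P, ↑r.atoms, hP.biUnion fun r _ => r.atoms.finite_toSet,
    fun _ hr => Set.subset_biUnion_of_mem (u := fun r : Rule => (↑r.atoms : Set ℕ)) hr⟩

lemma ModelsReduct.of_inter_eq {A : Set ℕ} {P : Program} {Y Z Z' : Interp}
    (hPA : ProgramOver A P) (hZ : Z ∩ A = Z' ∩ A) (h : ModelsReduct Z P Y) :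
    ModelsReduct Z' P Y := by
  intro r hr hneg hpos
  have hatoms : ∀ a, a ∈ r.head ∨ a ∈ r.pos → a ∈ A := fun a ha =>
    hPA r hr (by simp only [Rule.atoms, Finset.coe_union, Set.mem_union, Finset.mem_coe]; tauto)
  have hposZ : (↑r.pos : Set ℕ) ⊆ Z := fun a ha =>
    (hZ.symm ▸ ⟨hpos ha, hatoms a (Or.inr ha)⟩ : a ∈ Z ∩ A).1
  obtain ⟨a, ha, haZ⟩ := h r hr hneg hposZ
  exact ⟨a, ha, (hZ ▸ ⟨haZ, hatoms a (Or.inl ha)⟩ : a ∈ Z' ∩ A).1⟩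

lemma modelsReduct_self_iff {P : Program} {Y : Interp} : ModelsReduct Y P Y ↔ Models Y P :=
  ⟨fun h r hr hbody => h r hr hbody.2 hbody.1, fun h r hr hneg hpos => h r hr ⟨hpos, hneg⟩⟩

lemma modelsReduct_union_facts_iff {P : Program} {F : Set ℕ} {Z Y : Interp} :
    ModelsReduct Z (P ∪ Facts F) Y ↔ ModelsReduct Z P Y ∧ F ⊆ Z := by
  constructor
  · intro h
    refine ⟨fun r hr => h r (Or.inl hr), fun a ha => ?_⟩
    simpa using h ⟨{a}, ∅, ∅⟩ (Or.inr ⟨a, ha, rfl⟩) (by simp) (by simp)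
  · rintro ⟨hP, hF⟩ r (hr | ⟨a, ha, rfl⟩)
    · exact hP r hr
    · exact fun _ _ => ⟨a, Finset.mem_singleton_self a, hF ha⟩

lemma uEModel_self_iff {P : Program} {Y : Interp} : UEModel P Y Y ↔ Models Y P :=
  ⟨fun h => h.1.2.1, fun h =>
    ⟨⟨subset_rfl, h, modelsReduct_self_iff.2 h⟩, fun _ hX' hY => absurd hX'.1 hY.not_subset⟩⟩

lemma answerSet_union_facts_iff {P : Program} {F : Set ℕ} {Y : Interp} :
    AnswerSet (P ∪ Facts F) Y ↔
      Models Y P ∧ F ⊆ Y ∧ ∀ X, SEModel P X Y → F ⊆ X → X = Y := by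
  rw [AnswerSet, modelsReduct_union_facts_iff, modelsReduct_self_iff, and_assoc]
  simp only [modelsReduct_union_facts_iff, SEModel]
  refine and_congr_right fun hY => and_congr_right fun _ => ⟨?_, ?_⟩
  · rintro h X ⟨hXY, -, hX⟩ hFX
    by_contra hne
    exact h X (hXY.ssubset_of_ne hne) ⟨hX, hFX⟩
  · rintro h X hXY ⟨hX, hFX⟩
    exact hXY.ne (h X ⟨hXY.subset, hY, hX⟩ hFX)

lemma not_answerSet_union_facts {P : Program} {X Y : Interp} (hX : SEModel P X Y)
    (hXY : X ≠ Y) : ¬ AnswerSet (P ∪ Facts X) Y :=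
  fun h => hXY (answerSet_union_facts_iff.1 h |>.2.2 X hX subset_rfl)

lemma UnifEquiv.symm {P Q : Program} (h : UnifEquiv P Q) : UnifEquiv Q P :=
  fun F Y => (h F Y).symm

lemma UnifEquiv.models_iff {P Q : Program} (h : UnifEquiv P Q) (Y : Interp) :
    Models Y P ↔ Models Y Q := by
  have hself : ∀ R : Program, AnswerSet (R ∪ Facts Y) Y ↔ Models Y R := fun R => by
    rw [answerSet_union_facts_iff]
    exact ⟨And.left, fun hY => ⟨hY, subset_rfl, fun X hX hYX => hX.1.antisymm hYX⟩⟩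
  rw [← hself P, ← hself Q, h Y Y]

lemma exists_uEModel_of_seModel {A : Set ℕ} {P : Program} (hA : A.Finite)
    (hPA : ProgramOver A P) {X Y : Interp} (hX : SEModel P X Y) (hXY : X ≠ Y) :
    ∃ M, X ⊆ M ∧ M ≠ Y ∧ UEModel P M Y := by
  obtain ⟨y, hyY, hyX⟩ := Set.exists_of_ssubset (hX.1.ssubset_of_ne hXY)
  -- The reduct is blind outside `A`, so all of `Y \ A` but `y` can be added to `X`; what then
  -- remains between `B` and `Y` lies in the finite set `A ∪ {y}`.
  set B : Interp := X ∪ ((Y \ A) \ {y})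
  set S : Set Interp := {Z | B ⊆ Z ∧ Z ⊆ Y ∧ Z ≠ Y ∧ ModelsReduct Z P Y}
  have hBS : B ∈ S := by
    refine ⟨subset_rfl, Set.union_subset hX.1 (Set.sdiff_subset.trans Set.sdiff_subset),
      fun h => ?_, hX.2.2.of_inter_eq hPA ?_⟩
    · have : y ∈ B := h ▸ hyY
      simp [B, hyX] at this
    · ext a; simp only [B, Set.mem_inter_iff, Set.mem_union, Set.mem_sdiff]; tauto
  have hYB : (Y \ B).Finite :=
    (hA.union (Set.finite_singleton y)).subset fun a ⟨haY, haB⟩ => by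
      simp only [B, Set.mem_union, Set.mem_sdiff, Set.mem_singleton_iff] at haB ⊢
      tauto
  have hS : S.Finite := (Set.finite_Icc_of_finite_sdiff hYB).subset fun Z hZ => ⟨hZ.1, hZ.2.1⟩
  obtain ⟨M, hBM, hM⟩ := hS.exists_le_maximal hBS
  obtain ⟨-, hMY, hMne, hMred⟩ := hM.prop
  refine ⟨M, Set.subset_union_left.trans hBM, hMne, ⟨hMY, hX.2.1, hMred⟩, fun X' hX' hMX' => ?_⟩
  by_contra hne
  exact hM.not_prop_of_ssuperset hMX' ⟨hBM.trans hMX'.subset, hX'.1, hne, hX'.2.2⟩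

lemma answerSet_union_facts_iff_uEModel {P : Program} (hP : P.Finite) {F : Set ℕ} {Y : Interp} :
    AnswerSet (P ∪ Facts F) Y ↔
      UEModel P Y Y ∧ F ⊆ Y ∧ ∀ X, UEModel P X Y → F ⊆ X → X = Y := by
  obtain ⟨A, hA, hPA⟩ := exists_finite_programOver hP
  rw [answerSet_union_facts_iff, uEModel_self_iff]
  refine and_congr_right fun _ => and_congr_right fun _ =>
    ⟨fun h X hX => h X hX.1, fun h X hX hFX => ?_⟩
  by_contra hXY
  obtain ⟨M, hXM, hMY, hM⟩ := exists_uEModel_of_seModel hA hPA hX hXY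
  exact hMY (h M hM (hFX.trans hXM))

lemma UnifEquiv.uEModel {P Q : Program} (hQ : Q.Finite) (h : UnifEquiv P Q) {X Y : Interp}
    (hX : UEModel P X Y) : UEModel Q X Y := by
  have hYP : Models Y P := hX.1.2.1
  by_cases hXY : X = Y
  · subst hXY
    exact uEModel_self_iff.2 ((h.models_iff X).1 hYP)
  have hQX : ¬ AnswerSet (Q ∪ Facts X) Y := by
    rw [← h X Y]; exact not_answerSet_union_facts hX.1 hXY
  simp only [answerSet_union_facts_iff_uEModel hQ, uEModel_self_iff, not_and, not_forall] at hQX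
  obtain ⟨M, hM, hXM, hMY⟩ := hQX ((h.models_iff Y).1 hYP) hX.1.1
  suffices M = X from this ▸ hM
  by_contra hMX
  have hPM : ¬ AnswerSet (P ∪ Facts M) Y := by
    rw [h M Y]; exact not_answerSet_union_facts hM.1 hMY
  simp only [answerSet_union_facts_iff, not_and, not_forall] at hPM
  obtain ⟨W, hW, hMW, hWY⟩ := hPM hYP hM.1.1
  exact hWY (hX.2 W hW ((hXM.ssubset_of_ne (Ne.symm hMX)).trans_le hMW))

theorem stmt3 (P Q : Program) (hP : P.Finite) (hQ : Q.Finite) :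
    UnifEquiv P Q ↔ ∀ X Y : Interp, UEModel P X Y ↔ UEModel Q X Y := by
  refine ⟨fun h X Y => ⟨h.uEModel hQ, h.symm.uEModel hP⟩, fun h F Y => ?_⟩
  simp only [answerSet_union_facts_iff_uEModel hP, answerSet_union_facts_iff_uEModel hQ, h]
end

section
/- For programs P, Q and a set of atoms A: P and Q are strongly equivalent relative to A (P ∪ R and Q ∪ R have the same answer sets for every program R over A) if and only if for each unary program U over A, P ∪ U and Q ∪ U have the same answer sets. -/
/-!
Suppose `Y` is an answer set of `P ∪ R` with `R` over `A`, and compare `Y` with some `Z ⊆ Y`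
satisfying `R^Y`. The unary program consisting of the facts `Z ∩ A` and all rules `a ← b` with
`a, b ∈ (Y ∩ A) \ Z` has, below `Y`, only models `W` with `W ∩ A = Z ∩ A` or `W ∩ A = Y ∩ A`.
Since the reduct of `R` only sees atoms of `A`, every such `W` satisfies `R^Y`, so `Y` stays an
answer set after replacing `R` by this unary program. Transferring this to `Q`, the case `Z = Y`
shows that `Y` satisfies `Q^Y`, and a counter-model `Z ⊂ Y` of `(Q ∪ R)^Y` would itself witness that
`Y` is not an answer set of `Q` together with the unary program built from `Z`.
-/

def cliqueProg (S : Set ℕ) : Program := { r | ∃ a ∈ S, ∃ b ∈ S, r = ⟨{a}, {b}, ∅⟩ }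

def separatingProg (A Z Y : Set ℕ) : Program := Facts (Z ∩ A) ∪ cliqueProg ((Y ∩ A) \ Z)

section Reduct

variable {X Y : Interp}

lemma modelsReduct_union {P R : Program} :
    ModelsReduct X (P ∪ R) Y ↔ ModelsReduct X P Y ∧ ModelsReduct X R Y :=
  ⟨fun h => ⟨fun r hr => h r (Or.inl hr), fun r hr => h r (Or.inr hr)⟩,
    fun ⟨hP, hR⟩ r hr => hr.elim (hP r) (hR r)⟩

lemma modelsReduct_facts {F : Set ℕ} : ModelsReduct X (Facts F) Y ↔ F ⊆ X := by
  constructor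
  · intro h a ha
    simpa using h ⟨{a}, ∅, ∅⟩ ⟨a, ha, rfl⟩ (by simp) (by simp)
  · rintro hFX r ⟨a, ha, rfl⟩ - -
    exact ⟨a, Finset.mem_singleton_self a, hFX ha⟩

lemma modelsReduct_cliqueProg {S : Set ℕ} :
    ModelsReduct X (cliqueProg S) Y ↔ ∀ a ∈ S, ∀ b ∈ S, b ∈ X → a ∈ X := by
  constructor
  · intro h a ha b hb hbX
    simpa using h ⟨{a}, {b}, ∅⟩ ⟨a, ha, b, hb, rfl⟩ (by simp) (by simpa using hbX)
  · rintro h r ⟨a, ha, b, hb, rfl⟩ - hpos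
    exact ⟨a, Finset.mem_singleton_self a, h a ha b hb (by simpa using hpos)⟩

end Reduct

lemma ProgramOver.union {A : Set ℕ} {R₁ R₂ : Program} (h₁ : ProgramOver A R₁)
    (h₂ : ProgramOver A R₂) : ProgramOver A (R₁ ∪ R₂) :=
  fun r hr => hr.elim (h₁ r) (h₂ r)

lemma ProgramOver.modelsReduct_of_inter_eq {A : Set ℕ} {R : Program} (hR : ProgramOver A R)
    {Z W Y : Interp} (h : Z ∩ A = W ∩ A) (hZ : ModelsReduct Z R Y) : ModelsReduct W R Y := by
  intro r hr hneg hpos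
  have hA : (↑r.head ∪ ↑r.pos : Set ℕ) ⊆ A := fun x hx =>
    hR r hr (by simp only [Rule.atoms, Finset.coe_union]; exact Or.inl hx)
  have hposZ : (↑r.pos : Set ℕ) ⊆ Z := fun x hx =>
    (h.symm ▸ ⟨hpos hx, hA (Or.inr hx)⟩ : x ∈ Z ∩ A).1
  obtain ⟨a, ha, haZ⟩ := hZ r hr hneg hposZ
  exact ⟨a, ha, (h ▸ ⟨haZ, hA (Or.inl ha)⟩ : a ∈ W ∩ A).1⟩

section SeparatingProg

variable {A : Set ℕ} {Z Y : Interp}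

lemma programOver_separatingProg : ProgramOver A (separatingProg A Z Y) := by
  refine ProgramOver.union ?_ ?_
  · rintro r ⟨a, ha, rfl⟩
    simpa [Rule.atoms] using ha.2
  · rintro r ⟨a, ha, b, hb, rfl⟩
    simpa [Rule.atoms, Set.insert_subset_iff] using ⟨ha.1.2, hb.1.2⟩

lemma unary_separatingProg : ∀ r ∈ separatingProg A Z Y, Unary r := by
  rintro r (⟨a, -, rfl⟩ | ⟨a, -, b, -, rfl⟩) <;> exact ⟨by simp, rfl, by simp⟩

lemma modelsReduct_separatingProg_left : ModelsReduct Z (separatingProg A Z Y) Y :=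
  modelsReduct_union.mpr ⟨modelsReduct_facts.mpr Set.inter_subset_left,
    modelsReduct_cliqueProg.mpr fun _ _ _ hb hbZ => absurd hbZ hb.2⟩

lemma modelsReduct_separatingProg_right (hZY : Z ⊆ Y) :
    ModelsReduct Y (separatingProg A Z Y) Y :=
  modelsReduct_union.mpr ⟨modelsReduct_facts.mpr fun _ hx => hZY hx.1,
    modelsReduct_cliqueProg.mpr fun _ ha _ _ _ => ha.1.1⟩

lemma inter_eq_of_modelsReduct_separatingProg {W : Interp} (hWY : W ⊆ Y)
    (hW : ModelsReduct W (separatingProg A Z Y) Y) : W ∩ A = Z ∩ A ∨ W ∩ A = Y ∩ A := by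
  obtain ⟨hfacts, hclique⟩ := modelsReduct_union.mp hW
  have hZW : Z ∩ A ⊆ W := modelsReduct_facts.mp hfacts
  rw [modelsReduct_cliqueProg] at hclique
  by_cases hmeet : ∃ b ∈ (Y ∩ A) \ Z, b ∈ W
  · obtain ⟨b, hb, hbW⟩ := hmeet
    refine Or.inr (Set.Subset.antisymm (Set.inter_subset_inter_left A hWY) fun x hx => ⟨?_, hx.2⟩)
    by_cases hxZ : x ∈ Z
    · exact hZW ⟨hxZ, hx.2⟩
    · exact hclique x ⟨hx, hxZ⟩ b hb hbW
  · push Not at hmeet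
    refine Or.inl (Set.Subset.antisymm (fun x hx => ⟨?_, hx.2⟩) fun x hx => ⟨hZW hx, hx.2⟩)
    by_contra hxZ
    exact hmeet x ⟨⟨hWY hx.1, hx.2⟩, hxZ⟩ hx.1

lemma AnswerSet.union_separatingProg {P R : Program} (hAS : AnswerSet (P ∪ R) Y)
    (hR : ProgramOver A R) (hZY : Z ⊆ Y) (hZ : ModelsReduct Z R Y) :
    AnswerSet (P ∪ separatingProg A Z Y) Y := by
  obtain ⟨hYP, hYR⟩ := modelsReduct_union.mp hAS.1
  refine ⟨modelsReduct_union.mpr ⟨hYP, modelsReduct_separatingProg_right hZY⟩,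
    fun W hWY hW => ?_⟩
  obtain ⟨hWP, hWsep⟩ := modelsReduct_union.mp hW
  have hWR : ModelsReduct W R Y := by
    rcases inter_eq_of_modelsReduct_separatingProg hWY.subset hWsep with h | h
    · exact hR.modelsReduct_of_inter_eq h.symm hZ
    · exact hR.modelsReduct_of_inter_eq h.symm hYR
  exact hAS.2 W hWY (modelsReduct_union.mpr ⟨hWP, hWR⟩)

lemma not_answerSet_union_separatingProg {Q : Program} (hZY : Z ⊂ Y)
    (hZ : ModelsReduct Z Q Y) :
    ¬ AnswerSet (Q ∪ separatingProg A Z Y) Y := fun hAS =>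
  hAS.2 Z hZY (modelsReduct_union.mpr ⟨hZ, modelsReduct_separatingProg_left⟩)

end SeparatingProg

lemma answerSet_union_of_unary {A : Set ℕ} {P Q : Program}
    (H : ∀ U : Program, ProgramOver A U → (∀ r ∈ U, Unary r) →
      ∀ Y : Interp, AnswerSet (P ∪ U) Y → AnswerSet (Q ∪ U) Y)
    {R : Program} (hR : ProgramOver A R) {Y : Interp} (hAS : AnswerSet (P ∪ R) Y) :
    AnswerSet (Q ∪ R) Y := by
  have transfer : ∀ Z ⊆ Y, ModelsReduct Z R Y → AnswerSet (Q ∪ separatingProg A Z Y) Y :=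
    fun Z hZY hZ => H _ programOver_separatingProg unary_separatingProg Y
      (hAS.union_separatingProg hR hZY hZ)
  have hYR : ModelsReduct Y R Y := (modelsReduct_union.mp hAS.1).2
  have hYQ : ModelsReduct Y Q Y := (modelsReduct_union.mp (transfer Y subset_rfl hYR).1).1
  refine ⟨modelsReduct_union.mpr ⟨hYQ, hYR⟩, fun Z hZY hZ => ?_⟩
  obtain ⟨hZQ, hZR⟩ := modelsReduct_union.mp hZ
  exact not_answerSet_union_separatingProg hZY hZQ (transfer Z hZY.subset hZR)

theorem stmt10 (P Q : Program) (A : Set ℕ) :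
    RelStrongEquiv A P Q ↔
      ∀ U : Program, ProgramOver A U → (∀ r ∈ U, Unary r) →
        ∀ Y : Interp, AnswerSet (P ∪ U) Y ↔ AnswerSet (Q ∪ U) Y := by
  refine ⟨fun h U hU _ => h U hU, fun H R hR Y => ⟨?_, ?_⟩⟩
  · exact answerSet_union_of_unary (fun U hU hu Y => (H U hU hu Y).mp) hR
  · exact answerSet_union_of_unary (fun U hU hu Y => (H U hU hu Y).mpr) hR
end

section
/- For positive programs P and Q and a set of atoms A, P ≡ᵉ_A Q (for e ∈ {s,u}) holds if and only if P and Q have the same A-minimal models, where an A-minimal model of P is a classical model Y of P such that no Y' ⊂ Y with Y' ∩ A = Y ∩ A is a classical model of P. -/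
/-- `Y` is an `A`-minimal model of `P`. -/
def AMinModel (A : Set ℕ) (P : Program) (Y : Interp) : Prop :=
  Models Y P ∧ ∀ Y' : Interp, Y' ⊂ Y → Y' ∩ A = Y ∩ A → ¬ Models Y' P

section Aux

lemma pos_reduct {P : Program} (hP : Positive P) (Z Y : Interp) :
    ModelsReduct Z P Y ↔ Models Z P := by
  constructor
  · intro h r hr hsat
    exact h r hr (by simp [hP r hr]) hsat.1
  · intro h r hr _ hpos
    exact h r hr ⟨hpos, by simp [hP r hr]⟩

lemma over_reduct {A : Set ℕ} {R : Program} (hR : ProgramOver A R) {Z Z' Y : Interp}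
    (hZZ' : Z ∩ A = Z' ∩ A) (h : ModelsReduct Z R Y) : ModelsReduct Z' R Y := by
  intro r hr hneg hpos
  have hat : ↑r.atoms ⊆ A := hR r hr
  have hposA : ∀ a ∈ r.pos, a ∈ A := fun a ha =>
    hat (by simp [Rule.atoms, Finset.mem_union, ha])
  have hheadA : ∀ a ∈ r.head, a ∈ A := fun a ha =>
    hat (by simp [Rule.atoms, Finset.mem_union, ha])
  have hpos' : ↑r.pos ⊆ Z := by
    intro a ha
    have : a ∈ Z' ∩ A := ⟨hpos ha, hposA a ha⟩
    rw [← hZZ'] at this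
    exact this.1
  obtain ⟨b, hb, hbZ⟩ := h r hr hneg hpos'
  have : b ∈ Z ∩ A := ⟨hbZ, hheadA b hb⟩
  rw [hZZ'] at this
  exact ⟨b, hb, this.1⟩

lemma union_reduct {P R : Program} {Z Y : Interp} :
    ModelsReduct Z (P ∪ R) Y ↔ ModelsReduct Z P Y ∧ ModelsReduct Z R Y := by
  constructor
  · exact fun h => ⟨fun r hr => h r (Or.inl hr), fun r hr => h r (Or.inr hr)⟩
  · rintro ⟨h1, h2⟩ r (hr | hr)
    exacts [h1 r hr, h2 r hr]

lemma facts_reduct {F : Set ℕ} {Z Y : Interp} :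
    ModelsReduct Z (Facts F) Y ↔ F ⊆ Z := by
  constructor
  · intro h a haF
    obtain ⟨b, hb, hbZ⟩ := h ⟨{a}, ∅, ∅⟩ ⟨a, haF, rfl⟩ (by simp) (by simp)
    simp only [Finset.mem_singleton] at hb
    subst hb; exact hbZ
  · rintro h r ⟨a, haF, rfl⟩ _ _
    exact ⟨a, by simp, h haF⟩

lemma exists_amin {A : Set ℕ} {Q : Program} (hQ : Positive Q) {Z : Interp}
    (hZ : Models Z Q) : ∃ W, W ⊆ Z ∧ W ∩ A = Z ∩ A ∧ AMinModel A Q W := by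
  classical
  set S : Set (Set ℕ) := { W | W ⊆ Z ∧ Models W Q ∧ W ∩ A = Z ∩ A } with hSdef
  have hZS : Z ∈ S := ⟨subset_rfl, hZ, rfl⟩
  have H : ∀ c ⊆ S, IsChain (· ⊆ ·) c → c.Nonempty → ∃ lb ∈ S, ∀ s ∈ c, lb ⊆ s := by
    rintro c hc hchain ⟨W₁, hW₁⟩
    have hsub : ∀ W ∈ c, W ⊆ Z := fun W hW => (hc hW).1
    have hmod : ∀ W ∈ c, Models W Q := fun W hW => (hc hW).2.1
    have hinter : ∀ W ∈ c, W ∩ A = Z ∩ A := fun W hW => (hc hW).2.2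
    refine ⟨⋂₀ c, ⟨?_, ?_, ?_⟩, fun s hs => Set.sInter_subset_of_mem hs⟩
    · exact (Set.sInter_subset_of_mem hW₁).trans (hsub W₁ hW₁)
    · -- ⋂₀ c models Q
      intro r hr hsat
      have hpos : ↑r.pos ⊆ ⋂₀ c := hsat.1
      -- each W ∈ c satisfies the rule head
      have hhead : ∀ W ∈ c, ∃ a ∈ r.head, a ∈ W := by
        intro W hW
        exact hmod W hW r hr ⟨hpos.trans (Set.sInter_subset_of_mem hW), by simp [hQ r hr]⟩
      -- pick W₀ minimizing the cardinality of head ∩ W₀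
      set f : Set ℕ → Finset ℕ := fun W => r.head.filter (· ∈ W) with hf
      set N : Set ℕ := { n | ∃ W ∈ c, (f W).card = n } with hN
      have hNne : N.Nonempty := ⟨(f W₁).card, W₁, hW₁, rfl⟩
      obtain ⟨W₀, hW₀c, hW₀card⟩ := Nat.sInf_mem hNne
      have hmono : ∀ W ∈ c, f W₀ ⊆ f W := by
        intro W hW
        rcases eq_or_ne W₀ W with rfl | hne
        · exact subset_rfl
        rcases hchain hW₀c hW hne with h1 | h1
        · intro a ha
          simp only [hf, Finset.mem_filter] at ha ⊢
          exact ⟨ha.1, h1 ha.2⟩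
        · have hsub2 : f W ⊆ f W₀ := by
            intro a ha
            simp only [hf, Finset.mem_filter] at ha ⊢
            exact ⟨ha.1, h1 ha.2⟩
          have hle : (f W₀).card ≤ (f W).card := by
            rw [hW₀card]
            exact Nat.sInf_le ⟨W, hW, rfl⟩
          have heq : f W = f W₀ := Finset.eq_of_subset_of_card_le hsub2 hle
          rw [heq]
      obtain ⟨a, ha, haW₀⟩ := hhead W₀ hW₀c
      have haf : a ∈ f W₀ := by simp [hf, ha, haW₀]
      refine ⟨a, ha, Set.mem_sInter.mpr fun W hW => ?_⟩
      have := hmono W hW haf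
      simp only [hf, Finset.mem_filter] at this
      exact this.2
    · -- A-part preserved
      apply Set.Subset.antisymm
      · intro x hx
        rw [← hinter W₁ hW₁]
        exact ⟨Set.sInter_subset_of_mem hW₁ hx.1, hx.2⟩
      · intro x hx
        refine ⟨Set.mem_sInter.mpr fun W hW => ?_, hx.2⟩
        have : x ∈ W ∩ A := by rw [hinter W hW]; exact hx
        exact this.1
  obtain ⟨m, hmZ, hmS, hmmin⟩ := zorn_superset_nonempty S H Z hZS
  refine ⟨m, hmZ, hmS.2.2, hmS.2.1, ?_⟩
  intro Y' hY' hY'A hY'Q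
  have hY'S : Y' ∈ S := ⟨hY'.subset.trans hmZ, hY'Q, by rw [hY'A]; exact hmS.2.2⟩
  exact hY'.ne (le_antisymm hY'.subset (hmmin hY'S hY'.subset))

lemma key_strong {A : Set ℕ} {P Q : Program} (hP : Positive P) (hQ : Positive Q)
    (h : ∀ Y, AMinModel A P Y → AMinModel A Q Y)
    (h' : ∀ Y, AMinModel A Q Y → AMinModel A P Y)
    {R : Program} (hR : ProgramOver A R) {Y : Interp}
    (hY : AnswerSet (P ∪ R) Y) : AnswerSet (Q ∪ R) Y := by
  obtain ⟨hY1, hY2⟩ := hY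
  rw [union_reduct] at hY1
  have hRY : ModelsReduct Y R Y := hY1.2
  have hPY : Models Y P := (pos_reduct hP Y Y).1 hY1.1
  have haminP : AMinModel A P Y := by
    refine ⟨hPY, fun Z hZY hZA hZP => hY2 Z hZY ?_⟩
    rw [union_reduct]
    exact ⟨(pos_reduct hP Z Y).2 hZP, over_reduct hR hZA.symm hRY⟩
  have haminQ : AMinModel A Q Y := h Y haminP
  constructor
  · rw [union_reduct]
    exact ⟨(pos_reduct hQ Y Y).2 haminQ.1, hRY⟩
  · intro Z hZY hZred
    rw [union_reduct] at hZred
    have hZQ : Models Z Q := (pos_reduct hQ Z Y).1 hZred.1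
    have hZR : ModelsReduct Z R Y := hZred.2
    by_cases hcase : Z ∩ A = Y ∩ A
    · exact haminQ.2 Z hZY hcase hZQ
    · obtain ⟨W, hWZ, hWA, hWmin⟩ := exists_amin (A := A) hQ hZQ
      have haminPW : AMinModel A P W := h' W hWmin
      have hWY : W ⊂ Y := lt_of_le_of_lt hWZ hZY
      apply hY2 W hWY
      rw [union_reduct]
      exact ⟨(pos_reduct hP W Y).2 haminPW.1, over_reduct hR hWA.symm hZR⟩

lemma same_to_strong {A : Set ℕ} {P Q : Program} (hP : Positive P) (hQ : Positive Q)
    (h : ∀ Y, AMinModel A P Y ↔ AMinModel A Q Y) : RelStrongEquiv A P Q := by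
  intro R hR Y
  exact ⟨key_strong hP hQ (fun Y => (h Y).mp) (fun Y => (h Y).mpr) hR,
    key_strong hQ hP (fun Y => (h Y).mpr) (fun Y => (h Y).mp) hR⟩

lemma strong_to_unif {A : Set ℕ} {P Q : Program} (hs : RelStrongEquiv A P Q) :
    RelUnifEquiv A P Q := by
  intro F hF Y
  apply hs (Facts F)
  rintro r ⟨a, haF, rfl⟩
  intro x hx
  simp only [Rule.atoms, Finset.coe_union, Finset.coe_empty, Set.union_empty,
    Finset.coe_singleton, Set.mem_singleton_iff] at hx
  rw [hx]
  exact hF haF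

lemma amin_as_facts {A : Set ℕ} {P : Program} (hP : Positive P) {Y : Interp}
    (h : AMinModel A P Y) : AnswerSet (P ∪ Facts (Y ∩ A)) Y := by
  constructor
  · rw [union_reduct]
    exact ⟨(pos_reduct hP Y Y).2 h.1, facts_reduct.mpr Set.inter_subset_left⟩
  · intro Z hZY hZred
    rw [union_reduct] at hZred
    have hZP : Models Z P := (pos_reduct hP Z Y).1 hZred.1
    have hYA : Y ∩ A ⊆ Z := facts_reduct.mp hZred.2
    have hZA : Z ∩ A = Y ∩ A := by
      apply Set.Subset.antisymm
      · exact Set.inter_subset_inter_left A hZY.subset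
      · exact fun x hx => ⟨hYA hx, hx.2⟩
    exact h.2 Z hZY hZA hZP

lemma as_facts_amin {A : Set ℕ} {P : Program} (hP : Positive P) {Y : Interp}
    (h : AnswerSet (P ∪ Facts (Y ∩ A)) Y) : AMinModel A P Y := by
  obtain ⟨h1, h2⟩ := h
  rw [union_reduct] at h1
  refine ⟨(pos_reduct hP Y Y).1 h1.1, ?_⟩
  intro Z hZY hZA hZP
  apply h2 Z hZY
  rw [union_reduct]
  refine ⟨(pos_reduct hP Z Y).2 hZP, facts_reduct.mpr ?_⟩
  rw [← hZA]
  exact Set.inter_subset_left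

lemma unif_to_same {A : Set ℕ} {P Q : Program} (hP : Positive P) (hQ : Positive Q)
    (hu : RelUnifEquiv A P Q) : ∀ Y, AMinModel A P Y ↔ AMinModel A Q Y := by
  intro Y
  constructor
  · intro h
    exact as_facts_amin hQ ((hu (Y ∩ A) Set.inter_subset_right Y).mp (amin_as_facts hP h))
  · intro h
    exact as_facts_amin hP ((hu (Y ∩ A) Set.inter_subset_right Y).mpr (amin_as_facts hQ h))

end Aux


theorem stmt17 (P Q : Program) (A : Set ℕ) (hP : Positive P) (hQ : Positive Q) :
    (RelStrongEquiv A P Q ↔ ∀ Y : Interp, AMinModel A P Y ↔ AMinModel A Q Y) ∧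
    (RelUnifEquiv A P Q ↔ ∀ Y : Interp, AMinModel A P Y ↔ AMinModel A Q Y) := by
  constructor
  · constructor
    · intro hs
      exact unif_to_same hP hQ (strong_to_unif hs)
    · intro h
      exact same_to_strong hP hQ h
  · constructor
    · intro hu
      exact unif_to_same hP hQ hu
    · intro h
      exact strong_to_unif (same_to_strong hP hQ h)
end
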